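/- Let (U_n)_{n≥0} be the VLMC defined by a probabilized infinite comb with q_{0^∞}(0) = 1. If the series ∑_{n≥0} c_n diverges, then the trivial probability measure π on L defined by π(0^∞) = 1 is the unique stationary probability measure of (U_n). -/
import Mathlib


open MeasureTheory
open ProbabilityTheory (Kernel IsMarkovKernel)
open scoped ENNReal

namespace VLMC

/-- Left-infinite sequences over the alphabet `{0,1}`; `s 0` is the rightmost
(most recent) letter, `s 1` the one before it, etc. -/
abbrev L : Type := ℕ → Bool

/-- Append the letter `b` on the right of the left-infinite sequence `s`. -/
def extend (b : Bool) (s : L) : L := fun n => match n with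
  | 0 => b
  | k + 1 => s k

/-- Sequences whose letters, read from the rightmost one leftwards, start with `u`. -/
def cylRev (u : List Bool) : Set L := {s | ∀ i < u.length, s i = u.getD i false}

/-- The cylinder `Lw` of left-infinite sequences admitting the finite word `w` as a suffix. -/
def cyl (w : List Bool) : Set L := cylRev w.reverse

/-- `π` is a stationary (invariant) probability measure for the kernel `κ`. -/
def IsStationary (κ : Kernel L L) (π : Measure L) : Prop :=
  ∀ B : Set L, MeasurableSet B → π B = ∫⁻ s, κ s B ∂π

/-- `cₙ = ∏_{k=0}^{n-1} q_{0ᵏ1}(0)` (with `c₀ = 1`), for the infinite comb. -/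
noncomputable def combC (q : ℕ → Bool → ℝ≥0∞) (n : ℕ) : ℝ≥0∞ :=
  ∏ k ∈ Finset.range n, q k false

/-- The left-infinite sequence `0^∞`. -/
def zeroSeq : L := fun _ => false

/-- `κ` is the transition kernel of the VLMC associated with the probabilized
infinite comb whose contexts are the words `0ⁿ1`, `n ≥ 0` (with probability
measures `q n` on the alphabet) and the infinite word `0^∞` (with probability
measure `qinf`) : from a state with context `0ⁿ1` (i.e. ending with `10ⁿ`),
a letter `α` is appended on the right with probability `q n α`, and from the
state `0^∞` with probability `qinf α`. -/
def IsCombKernel (q : ℕ → Bool → ℝ≥0∞) (qinf : Bool → ℝ≥0∞) (κ : Kernel L L) : Prop :=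
  (∀ (n : ℕ) (s : L), s ∈ cylRev (List.replicate n false ++ [true]) →
      κ s = q n false • Measure.dirac (extend false s)
          + q n true • Measure.dirac (extend true s)) ∧
  κ zeroSeq = qinf false • Measure.dirac (extend false zeroSeq)
            + qinf true • Measure.dirac (extend true zeroSeq)

/-- The set of sequences whose first `n` letters are `false` and whose `n`-th letter
is `true`. -/
def auxA (n : ℕ) : Set L := cylRev (List.replicate n false ++ [true])

lemma aux_getD (n i : ℕ) (h : i ≤ n) :
    (List.replicate n false ++ [true]).getD i false = decide (i = n) := by
  rcases lt_or_eq_of_le h with h | h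
  · rw [List.getD_eq_getElem _ _ (by simp [Nat.lt_succ_of_lt h]),
      List.getElem_append_left (by simpa)]
    simp [Nat.ne_of_lt h]
  · subst h
    rw [List.getD_eq_getElem _ _ (by simp), List.getElem_append_right (by simp)]
    simp

lemma mem_auxA (n : ℕ) (s : L) :
    s ∈ auxA n ↔ (∀ i < n, s i = false) ∧ s n = true := by
  constructor
  · intro h
    refine ⟨fun i hi => ?_, ?_⟩
    · have := h i (by simp; omega)
      rwa [aux_getD n i hi.le, decide_eq_false (Nat.ne_of_lt hi)] at this
    · have := h n (by simp)
      rwa [aux_getD n n le_rfl, decide_eq_true rfl] at this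
  · rintro ⟨h1, h2⟩ i hi
    simp only [List.length_append, List.length_replicate, List.length_singleton] at hi
    rw [aux_getD n i (by omega)]
    rcases lt_or_eq_of_le (Nat.le_of_lt_succ hi) with h | h
    · rw [h1 i h, decide_eq_false (Nat.ne_of_lt h)]
    · subst h; rw [h2, decide_eq_true rfl]

lemma measurableSet_auxA (n : ℕ) : MeasurableSet (auxA n) := by
  have : auxA n = (⋂ i ∈ Set.Iio n, (fun s : L => s i) ⁻¹' {false}) ∩
      ((fun s : L => s n) ⁻¹' {true}) := by
    ext s
    simp [mem_auxA, Set.mem_iInter]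
  rw [this]
  exact (MeasurableSet.biInter (Set.to_countable _)
    (fun i _ => (measurable_pi_apply i) (measurableSet_singleton _))).inter
    ((measurable_pi_apply n) (measurableSet_singleton _))

lemma auxA_eq_of_mem {m n : ℕ} {s : L} (hm : s ∈ auxA m) (hn : s ∈ auxA n) : m = n := by
  rw [mem_auxA] at hm hn
  by_contra h
  rcases Nat.lt_or_ge m n with h' | h'
  · exact absurd (hn.1 m h') (by simp [hm.2])
  · exact absurd (hm.1 n (lt_of_le_of_ne h' (Ne.symm h))) (by simp [hn.2])

lemma zeroSeq_not_mem_auxA (n : ℕ) : zeroSeq ∉ auxA n := by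
  rw [mem_auxA]
  rintro ⟨-, h⟩
  simp [zeroSeq] at h

lemma exists_auxA_of_ne {s : L} (h : s ≠ zeroSeq) : ∃ n, s ∈ auxA n := by
  have hex : ∃ n, s n = true := by
    by_contra hc
    push_neg at hc
    exact h (funext fun n => by have := hc n; revert this; cases s n <;> simp [zeroSeq])
  refine ⟨Nat.find hex, ?_⟩
  rw [mem_auxA]
  refine ⟨fun i hi => ?_, Nat.find_spec hex⟩
  have := Nat.find_min hex hi
  revert this; cases s i <;> simp

lemma extend_true_mem (s : L) : extend true s ∈ auxA 0 := by
  rw [mem_auxA]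
  exact ⟨fun i hi => absurd hi (Nat.not_lt_zero i), rfl⟩

lemma extend_false_mem_iff (n : ℕ) (s : L) :
    extend false s ∈ auxA (n + 1) ↔ s ∈ auxA n := by
  simp only [mem_auxA]
  constructor
  · rintro ⟨h1, h2⟩
    exact ⟨fun i hi => h1 (i + 1) (by omega), h2⟩
  · rintro ⟨h1, h2⟩
    refine ⟨fun i hi => ?_, h2⟩
    cases i with
    | zero => rfl
    | succ k => exact h1 k (by omega)

lemma extend_false_zeroSeq : extend false zeroSeq = zeroSeq := by
  funext n
  cases n <;> rfl

lemma qinf_true_eq_zero {qinf : Bool → ℝ≥0∞} (hqinf : qinf false + qinf true = 1)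
    (hred : qinf false = 1) : qinf true = 0 := by
  rw [hred] at hqinf
  have : (1 : ℝ≥0∞) + qinf true = 1 + 0 := by simpa using hqinf
  exact (ENNReal.add_right_inj (by norm_num)).mp this

/-- (Infinite comb, reducible case, divergent series.)
If `q_{0^∞}(0) = 1` and the series `∑ cₙ` diverges, then the trivial probability
measure `δ_{0^∞}` is the unique stationary probability measure of the VLMC. -/
theorem comb_reducible_divergent
    (q : ℕ → Bool → ℝ≥0∞) (qinf : Bool → ℝ≥0∞)
    (hq : ∀ n, q n false + q n true = 1) (hqinf : qinf false + qinf true = 1)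
    (hred : qinf false = 1)
    (hdiv : (∑' n, combC q n) = ∞)
    (κ : Kernel L L) [IsMarkovKernel κ] (hκ : IsCombKernel q qinf κ) :
    ∀ π : Measure L, (IsProbabilityMeasure π ∧ IsStationary κ π) ↔
      π = Measure.dirac zeroSeq := by
  have hqt : qinf true = 0 := qinf_true_eq_zero hqinf hred
  have hκ0 : κ zeroSeq = Measure.dirac zeroSeq := by
    rw [hκ.2, hred, hqt, one_smul, zero_smul, add_zero, extend_false_zeroSeq]
  -- the key pointwise computation of the kernel on the sets `auxA (n+1)`
  have hker : ∀ (n : ℕ) (s : L),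
      κ s (auxA (n + 1)) = (auxA n).indicator (fun _ => q n false) s := by
    intro n s
    by_cases hs : s = zeroSeq
    · subst hs
      rw [hκ0, Measure.dirac_apply' _ (measurableSet_auxA (n + 1)),
        Set.indicator_of_notMem (zeroSeq_not_mem_auxA n),
        Set.indicator_of_notMem (zeroSeq_not_mem_auxA (n + 1))]
    · obtain ⟨m, hm⟩ := exists_auxA_of_ne hs
      rw [hκ.1 m s hm]
      have htrue : Measure.dirac (extend true s) (auxA (n + 1)) = 0 := by
        rw [Measure.dirac_apply' _ (measurableSet_auxA (n + 1)),
          Set.indicator_of_notMem]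
        intro hc
        exact Nat.succ_ne_zero n (auxA_eq_of_mem hc (extend_true_mem s))
      rw [Measure.add_apply, Measure.smul_apply, Measure.smul_apply, htrue,
        smul_zero, add_zero, Measure.dirac_apply' _ (measurableSet_auxA (n + 1))]
      by_cases hmn : m = n
      · subst hmn
        rw [Set.indicator_of_mem ((extend_false_mem_iff m s).mpr hm),
          Set.indicator_of_mem hm]
        simp
      · have h1 : extend false s ∉ auxA (n + 1) :=
          fun hc => hmn (auxA_eq_of_mem hm ((extend_false_mem_iff n s).mp hc))
        have h2 : s ∉ auxA n := fun hc => hmn (auxA_eq_of_mem hm hc)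
        rw [Set.indicator_of_notMem h1, Set.indicator_of_notMem h2, smul_zero]
  intro π
  constructor
  · rintro ⟨hprob, hstat⟩
    -- the recurrence π (auxA (n+1)) = q n false * π (auxA n)
    have hrec : ∀ n, π (auxA (n + 1)) = q n false * π (auxA n) := by
      intro n
      rw [hstat _ (measurableSet_auxA (n + 1))]
      calc ∫⁻ s, κ s (auxA (n + 1)) ∂π
          = ∫⁻ s, (auxA n).indicator (fun _ => q n false) s ∂π :=
            lintegral_congr (hker n)
        _ = ∫⁻ _ in auxA n, q n false ∂π :=
            lintegral_indicator (measurableSet_auxA n) _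
        _ = q n false * π (auxA n) := setLIntegral_const _ _
    have hval : ∀ n, π (auxA n) = combC q n * π (auxA 0) := by
      intro n
      induction n with
      | zero => simp [combC]
      | succ k ih =>
        have hc : combC q (k + 1) = combC q k * q k false := Finset.prod_range_succ _ _
        rw [hrec k, ih, hc]
        ring
    have hdisj : Pairwise (Function.onFun Disjoint auxA) := by
      intro m n hmn
      rw [Function.onFun, Set.disjoint_left]
      exact fun s hsm hsn => hmn (auxA_eq_of_mem hsm hsn)
    have hsum : (∑' n, π (auxA n)) ≤ 1 := by
      rw [← measure_iUnion hdisj measurableSet_auxA]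
      exact prob_le_one
    have ha0 : π (auxA 0) = 0 := by
      by_contra h
      have : (∑' n, π (auxA n)) = ∞ := by
        rw [tsum_congr hval, ENNReal.tsum_mul_right, hdiv, ENNReal.top_mul h]
      rw [this] at hsum
      exact absurd hsum (not_le.mpr ENNReal.one_lt_top)
    have hcompl : π ({zeroSeq}ᶜ) = 0 := by
      have hU : ({zeroSeq}ᶜ : Set L) = ⋃ n, auxA n := by
        ext s
        simp only [Set.mem_compl_iff, Set.mem_singleton_iff, Set.mem_iUnion]
        constructor
        · exact fun h => exists_auxA_of_ne h
        · rintro ⟨n, hn⟩ rfl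
          exact zeroSeq_not_mem_auxA n hn
      rw [hU, measure_iUnion hdisj measurableSet_auxA, tsum_congr hval,
        ENNReal.tsum_mul_right, ha0, mul_zero]
    ext B hB
    rw [Measure.dirac_apply' _ hB]
    by_cases hz : zeroSeq ∈ B
    · have hsub : Bᶜ ⊆ ({zeroSeq}ᶜ : Set L) := fun s hs h => hs (by
        rw [Set.mem_singleton_iff] at h
        rw [h]; exact hz)
      have h1 : π Bᶜ = 0 := measure_mono_null hsub hcompl
      have h2 := measure_add_measure_compl hB (μ := π)
      rw [h1, add_zero, measure_univ] at h2
      rw [h2, Set.indicator_of_mem hz]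
      rfl
    · have hsub : B ⊆ ({zeroSeq}ᶜ : Set L) := fun s hs h => hz (by
        rw [Set.mem_singleton_iff] at h
        rwa [h] at hs)
      have h1 : π B = 0 := measure_mono_null hsub hcompl
      rw [h1, Set.indicator_of_notMem hz]
  · rintro rfl
    refine ⟨Measure.dirac.isProbabilityMeasure, fun B hB => ?_⟩
    rw [lintegral_dirac' _ (κ.measurable_coe hB), hκ0]

end VLMC
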